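/- For every real x ∈ (0,1], one has x·log_2(1/x) ≤ ω_2(x) ≤ x·log_2(4/(3x)). -/

import Mathlib

/-- Distance from `x` to the nearest integer: `‖x‖`. -/
noncomputable def nearestIntDist (x : ℝ) : ℝ := |x - (round x : ℝ)|

/-- The generalized Takagi function
`ω_m(x) = ∑_{k=0}^∞ m^{-k} ‖m^k x‖_{1/m}`, where `‖·‖_α = min{‖·‖, α}`. -/
noncomputable def omegaT (m : ℕ) (x : ℝ) : ℝ :=
  ∑' k : ℕ, ((m : ℝ) ^ k)⁻¹ * min (nearestIntDist ((m : ℝ) ^ k * x)) (1 / m)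

/-!
With the doubling map `d` on `[0, 1]` (`x ↦ 2x` on `[0, 1/2]`, `x ↦ 2x - 1` on `(1/2, 1]`),
periodicity turns the self-similarity of the Takagi function into
`ω₂ x = ‖x‖ + ω₂ (d x) / 2`. The two bounds `L` and `U` of the theorem satisfy this equation
as `L x ≤ ‖x‖ + L (d x) / 2` and `‖x‖ + U (d x) / 2 ≤ U x`: with equality on the left branch,
and on the right branch (`t = 2x - 1`) because
`F t = (1 + t) log (1 + t) - t log t - t log 4` satisfies `0 ≤ F t ≤ log (4/3)` on `[0, 1]`
(`F` increases up to `t = 1/3` and then decreases, and `F 0 = F 1 = 0`). The differences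
`L - ω₂` and `ω₂ - U` are bounded above and satisfy `h x ≤ h (d x) / 2`, so iterating forces
them to be `≤ 0`.
-/

open Real Set Filter Topology

lemma nonpos_of_le_mul_comp {α : Type*} {S : Set α} {d : α → α} {h : α → ℝ} {c C : ℝ}
    (hc₀ : 0 ≤ c) (hc₁ : c < 1) (hd : MapsTo d S S) (hC : ∀ x ∈ S, h x ≤ C)
    (hh : ∀ x ∈ S, h x ≤ c * h (d x)) {x : α} (hx : x ∈ S) : h x ≤ 0 := by
  have key : ∀ n : ℕ, ∀ x ∈ S, h x ≤ c ^ n * C := by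
    intro n
    induction n with
    | zero => simpa using hC
    | succ n ih =>
      intro x hx
      calc h x ≤ c * h (d x) := hh x hx
        _ ≤ c * (c ^ n * C) := mul_le_mul_of_nonneg_left (ih _ (hd hx)) hc₀
        _ = c ^ (n + 1) * C := by ring
  have hlim : Tendsto (fun n : ℕ ↦ c ^ n * C) atTop (𝓝 0) := by
    simpa using (tendsto_pow_atTop_nhds_zero_of_lt_one hc₀ hc₁).mul_const C
  exact ge_of_tendsto' hlim fun n ↦ key n x hx

lemma nearestIntDist_nonneg (x : ℝ) : 0 ≤ nearestIntDist x := abs_nonneg _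

lemma nearestIntDist_le_half (x : ℝ) : nearestIntDist x ≤ 1 / 2 := abs_sub_round x

lemma nearestIntDist_add_intCast (x : ℝ) (n : ℤ) : nearestIntDist (x + n) = nearestIntDist x := by
  simp only [nearestIntDist, round_add_intCast, Int.cast_add, add_sub_add_right_eq_sub]

lemma nearestIntDist_eq_min {x : ℝ} (hx : x ∈ Icc (0 : ℝ) 1) :
    nearestIntDist x = min x (1 - x) := by
  rcases hx.2.eq_or_lt with rfl | hx1
  · simp [nearestIntDist]
  · rw [nearestIntDist, abs_sub_round_eq_min, Int.fract_eq_self.2 ⟨hx.1, hx1⟩]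

section omegaT

variable {m : ℕ}

lemma omegaT_term_nonneg (x : ℝ) (k : ℕ) :
    0 ≤ ((m : ℝ) ^ k)⁻¹ * min (nearestIntDist ((m : ℝ) ^ k * x)) (1 / m) :=
  mul_nonneg (by positivity) (le_min (nearestIntDist_nonneg _) (by positivity))

lemma omegaT_term_le (x : ℝ) (k : ℕ) :
    ((m : ℝ) ^ k)⁻¹ * min (nearestIntDist ((m : ℝ) ^ k * x)) (1 / m) ≤ (m : ℝ)⁻¹ ^ k * (1 / m) := by
  rw [inv_pow]
  exact mul_le_mul_of_nonneg_left (min_le_right _ _) (by positivity)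

lemma summable_geometric_inv_natCast (hm : 1 < m) : Summable fun k : ℕ ↦ (m : ℝ)⁻¹ ^ k :=
  summable_geometric_of_lt_one (by positivity) (inv_lt_one_of_one_lt₀ (by exact_mod_cast hm))

lemma summable_omegaT (hm : 1 < m) (x : ℝ) :
    Summable fun k : ℕ ↦ ((m : ℝ) ^ k)⁻¹ * min (nearestIntDist ((m : ℝ) ^ k * x)) (1 / m) :=
  .of_nonneg_of_le (omegaT_term_nonneg x) (omegaT_term_le x)
    ((summable_geometric_inv_natCast hm).mul_right _)

lemma omegaT_nonneg (m : ℕ) (x : ℝ) : 0 ≤ omegaT m x := tsum_nonneg (omegaT_term_nonneg x)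

lemma omegaT_le (hm : 1 < m) (x : ℝ) : omegaT m x ≤ 1 / (m - 1) := by
  have hm' : (1 : ℝ) < m := by exact_mod_cast hm
  calc omegaT m x ≤ ∑' k : ℕ, (m : ℝ)⁻¹ ^ k * (1 / m) :=
        (summable_omegaT hm x).tsum_le_tsum (omegaT_term_le x)
          ((summable_geometric_inv_natCast hm).mul_right _)
    _ = 1 / (m - 1) := by
      rw [tsum_mul_right, tsum_geometric_of_lt_one (by positivity) (inv_lt_one_of_one_lt₀ hm')]
      field_simp

lemma omegaT_add_intCast (m : ℕ) (x : ℝ) (n : ℤ) : omegaT m (x + n) = omegaT m x := by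
  refine tsum_congr fun k ↦ ?_
  have : (m : ℝ) ^ k * (x + n) = (m : ℝ) ^ k * x + ((m ^ k * n : ℤ) : ℝ) := by push_cast; ring
  rw [this, nearestIntDist_add_intCast]

lemma omegaT_eq_add (hm : 1 < m) (x : ℝ) :
    omegaT m x = min (nearestIntDist x) (1 / m) + omegaT m (m * x) / m := by
  rw [omegaT, (summable_omegaT hm x).tsum_eq_zero_add, omegaT, ← tsum_div_const]
  congr 1
  · simp
  · refine tsum_congr fun k ↦ ?_
    rw [pow_succ, mul_assoc, mul_inv, div_eq_mul_inv]
    ring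

end omegaT

noncomputable def doubling (x : ℝ) : ℝ := if x ≤ 1 / 2 then 2 * x else 2 * x - 1

lemma mapsTo_doubling : MapsTo doubling (Icc 0 1) (Icc 0 1) := by
  rintro x ⟨h0, h1⟩
  unfold doubling
  split_ifs <;> constructor <;> linarith

lemma omegaT_two_eq_doubling (x : ℝ) :
    omegaT 2 x = nearestIntDist x + omegaT 2 (doubling x) / 2 := by
  rw [omegaT_eq_add one_lt_two, Nat.cast_ofNat, min_eq_left (nearestIntDist_le_half x)]
  unfold doubling
  split_ifs
  · rfl
  · rw [← omegaT_add_intCast 2 (2 * x - 1) 1]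
    norm_num

noncomputable def doublingDefect (t : ℝ) : ℝ := (1 + t) * log (1 + t) - t * log t - t * log 4

lemma hasDerivAt_doublingDefect {t : ℝ} (ht : 0 < t) :
    HasDerivAt doublingDefect (log (1 + t) - log (4 * t)) t := by
  have h1 := (hasDerivAt_mul_log (x := 1 + t) (by positivity)).comp_const_add 1 t
  have h2 := hasDerivAt_mul_log ht.ne'
  have h3 := (hasDerivAt_id t).mul_const (log 4)
  refine ((h1.sub h2).sub h3).congr_deriv ?_
  rw [log_mul (by norm_num) ht.ne']
  ring

lemma continuous_doublingDefect : Continuous doublingDefect :=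
  ((continuous_mul_log.comp (continuous_const_add 1)).sub continuous_mul_log).sub
    (continuous_id.mul continuous_const)

lemma monotoneOn_doublingDefect : MonotoneOn doublingDefect (Icc 0 (1 / 3)) := by
  refine monotoneOn_of_deriv_nonneg (convex_Icc _ _) continuous_doublingDefect.continuousOn
    (fun t ht ↦ ?_) (fun t ht ↦ ?_) <;> rw [interior_Icc] at ht
  · exact (hasDerivAt_doublingDefect ht.1).differentiableAt.differentiableWithinAt
  · rw [(hasDerivAt_doublingDefect ht.1).deriv, sub_nonneg]
    exact log_le_log (by linarith [ht.1]) (by linarith [ht.2])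

lemma antitoneOn_doublingDefect : AntitoneOn doublingDefect (Icc (1 / 3) 1) := by
  refine antitoneOn_of_deriv_nonpos (convex_Icc _ _) continuous_doublingDefect.continuousOn
    (fun t ht ↦ ?_) (fun t ht ↦ ?_) <;> rw [interior_Icc] at ht
  · exact (hasDerivAt_doublingDefect (by linarith [ht.1])).differentiableAt.differentiableWithinAt
  · rw [(hasDerivAt_doublingDefect (by linarith [ht.1])).deriv, sub_nonpos]
    exact log_le_log (by linarith [ht.1]) (by linarith [ht.1])

lemma doublingDefect_mem_Icc {t : ℝ} (ht : t ∈ Icc (0 : ℝ) 1) :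
    doublingDefect t ∈ Icc 0 (log (4 / 3)) := by
  have at_zero : doublingDefect 0 = 0 := by simp [doublingDefect]
  have at_one : doublingDefect 1 = 0 := by
    rw [doublingDefect, show (4 : ℝ) = 2 ^ 2 by norm_num, log_pow]
    norm_num
  have at_third : doublingDefect (1 / 3) = log (4 / 3) := by
    rw [doublingDefect, show (1 : ℝ) + 1 / 3 = 4 / 3 by norm_num, one_div, log_inv,
      log_div (by norm_num) (by norm_num)]
    ring
  rcases le_total t (1 / 3) with h | h
  · exact ⟨at_zero ▸ monotoneOn_doublingDefect ⟨le_rfl, by norm_num⟩ ⟨ht.1, h⟩ ht.1,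
      at_third ▸ monotoneOn_doublingDefect ⟨ht.1, h⟩ ⟨by norm_num, le_rfl⟩ h⟩
  · exact ⟨at_one ▸ antitoneOn_doublingDefect ⟨h, ht.2⟩ ⟨by norm_num, le_rfl⟩ ht.2,
      at_third ▸ antitoneOn_doublingDefect ⟨le_rfl, by norm_num⟩ ⟨h, ht.2⟩ h⟩

noncomputable def takagiLowerBound (x : ℝ) : ℝ := x * logb 2 (1 / x)

noncomputable def takagiUpperBound (x : ℝ) : ℝ := x * logb 2 (4 / (3 * x))

lemma takagiLowerBound_eq_negMulLog (x : ℝ) : takagiLowerBound x = negMulLog x / log 2 := by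
  rw [takagiLowerBound, logb, one_div, log_inv, negMulLog]
  ring

lemma takagiUpperBound_eq (x : ℝ) :
    takagiUpperBound x = takagiLowerBound x + x * logb 2 (4 / 3) := by
  rcases eq_or_ne x 0 with rfl | hx
  · simp [takagiUpperBound, takagiLowerBound]
  · rw [takagiUpperBound, takagiLowerBound, div_mul_eq_div_div, logb_div (by positivity) hx,
      one_div, logb_inv]
    ring

lemma takagiLowerBound_two_mul (x : ℝ) :
    takagiLowerBound (2 * x) = 2 * takagiLowerBound x - 2 * x := by
  rcases eq_or_ne x 0 with rfl | hx
  · simp [takagiLowerBound]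
  · rw [takagiLowerBound_eq_negMulLog, takagiLowerBound_eq_negMulLog, negMulLog, negMulLog,
      log_mul two_ne_zero hx]
    field_simp [(log_pos one_lt_two).ne']
    ring

lemma takagiUpperBound_two_mul (x : ℝ) :
    takagiUpperBound (2 * x) = 2 * takagiUpperBound x - 2 * x := by
  rw [takagiUpperBound_eq, takagiUpperBound_eq, takagiLowerBound_two_mul]
  ring

lemma takagiLowerBound_eq_sub_doublingDefect {x : ℝ} (hx : x ≠ 0) :
    takagiLowerBound x =
      1 - x + takagiLowerBound (2 * x - 1) / 2 - doublingDefect (2 * x - 1) / (2 * log 2) := by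
  rw [takagiLowerBound_eq_negMulLog, takagiLowerBound_eq_negMulLog, doublingDefect,
    show 1 + (2 * x - 1) = 2 * x by ring, log_mul two_ne_zero hx,
    show (4 : ℝ) = 2 ^ 2 by norm_num, log_pow, negMulLog, negMulLog]
  field_simp [(log_pos one_lt_two).ne']
  ring

lemma takagiLowerBound_le_doubling {x : ℝ} (hx : x ∈ Icc (0 : ℝ) 1) :
    takagiLowerBound x ≤ nearestIntDist x + takagiLowerBound (doubling x) / 2 := by
  rw [nearestIntDist_eq_min hx, doubling]
  split_ifs with h
  · rw [min_eq_left (by linarith), takagiLowerBound_two_mul]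
    linarith
  · have hD := (doublingDefect_mem_Icc (t := 2 * x - 1) ⟨by linarith, by linarith [hx.2]⟩).1
    have : 0 ≤ doublingDefect (2 * x - 1) / (2 * log 2) := div_nonneg hD (by positivity)
    rw [min_eq_right (by linarith), takagiLowerBound_eq_sub_doublingDefect (by linarith)]
    linarith

lemma doubling_le_takagiUpperBound {x : ℝ} (hx : x ∈ Icc (0 : ℝ) 1) :
    nearestIntDist x + takagiUpperBound (doubling x) / 2 ≤ takagiUpperBound x := by
  rw [nearestIntDist_eq_min hx, doubling]
  split_ifs with h
  · rw [min_eq_left (by linarith), takagiUpperBound_two_mul]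
    linarith
  · have hD := (doublingDefect_mem_Icc (t := 2 * x - 1) ⟨by linarith, by linarith [hx.2]⟩).2
    have : doublingDefect (2 * x - 1) / (2 * log 2) ≤ logb 2 (4 / 3) / 2 := by
      rw [logb, div_div, mul_comm (log 2)]
      gcongr
    rw [min_eq_right (by linarith), takagiUpperBound_eq, takagiUpperBound_eq,
      takagiLowerBound_eq_sub_doublingDefect (x := x) (by linarith)]
    linarith

lemma takagiLowerBound_le {x : ℝ} (hx : 0 ≤ x) : takagiLowerBound x ≤ 1 / log 2 := by
  rw [takagiLowerBound_eq_negMulLog]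
  gcongr
  linarith [negMulLog_le_one_sub_self hx]

lemma takagiUpperBound_nonneg {x : ℝ} (hx : x ∈ Icc (0 : ℝ) 1) : 0 ≤ takagiUpperBound x := by
  rcases hx.1.eq_or_lt with rfl | hx0
  · simp [takagiUpperBound]
  · refine mul_nonneg hx0.le (logb_nonneg one_lt_two ?_)
    rw [le_div_iff₀ (by positivity)]
    linarith [hx.2]

lemma takagiLowerBound_le_omegaT_two {x : ℝ} (hx : x ∈ Icc (0 : ℝ) 1) :
    takagiLowerBound x ≤ omegaT 2 x := by
  have := nonpos_of_le_mul_comp (h := fun y ↦ takagiLowerBound y - omegaT 2 y) (c := 1 / 2)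
    (by norm_num) (by norm_num) mapsTo_doubling
    (fun y hy ↦ by linarith [takagiLowerBound_le hy.1, omegaT_nonneg 2 y])
    (fun y hy ↦ by linarith [takagiLowerBound_le_doubling hy, omegaT_two_eq_doubling y]) hx
  linarith

lemma omegaT_two_le_takagiUpperBound {x : ℝ} (hx : x ∈ Icc (0 : ℝ) 1) :
    omegaT 2 x ≤ takagiUpperBound x := by
  have omegaT_two_le_one (y : ℝ) : omegaT 2 y ≤ 1 := by
    simpa [show (2 - 1 : ℝ)⁻¹ = 1 by norm_num] using omegaT_le one_lt_two y
  have := nonpos_of_le_mul_comp (h := fun y ↦ omegaT 2 y - takagiUpperBound y) (c := 1 / 2)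
    (C := 1) (by norm_num) (by norm_num) mapsTo_doubling
    (fun y hy ↦ by linarith [omegaT_two_le_one y, takagiUpperBound_nonneg hy])
    (fun y hy ↦ by linarith [doubling_le_takagiUpperBound hy, omegaT_two_eq_doubling y]) hx
  linarith

theorem stmt18 {x : ℝ} (hx : x ∈ Set.Ioc (0 : ℝ) 1) :
    x * Real.logb 2 (1 / x) ≤ omegaT 2 x ∧
    omegaT 2 x ≤ x * Real.logb 2 (4 / (3 * x)) :=
  ⟨takagiLowerBound_le_omegaT_two (Ioc_subset_Icc_self hx),
    omegaT_two_le_takagiUpperBound (Ioc_subset_Icc_self hx)⟩
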